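/- arXiv:1810.07667 — 3 statements merged into one kernel-verified Lean document; each statement's English description precedes it below -/
import Mathlib

section
/- McCarthy's left-sequential three-valued propositional logic satisfies all eleven Guzman–Squier axioms: for all x, y, z in {T, F, ⊥}: (1) ¬T = F; (2) ¬⊥ = ⊥; (3) ¬¬x = x; (4) ¬(x ⋀ y) = ¬x ⋁ ¬y; (5) x ⇒ y = ¬x ⋁ y; (6) x ⋀ (y ⋀ z) = (x ⋀ y) ⋀ z; (7) T ⋀ x = x; (8) x ⋁ (x ⋀ y) = x; (9) x ⋀ (y ⋁ z) = (x ⋀ y) ⋁ (x ⋀ z); (10) (x ⋁ y) ⋀ z = (x ⋀ z) ⋁ (¬x ⋀ y ⋀ z); (11) (x ⋀ y) ⋁ (y ⋀ x) = (y ⋀ x) ⋁ (x ⋀ y). -/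
/-- The three truth values of McCarthy's left-sequential three-valued logic. -/
inductive Three : Type
  | tt : Three
  | ff : Three
  | bot : Three
  deriving DecidableEq

/-- Negation. -/
def Three.neg : Three → Three
  | .tt => .ff
  | .ff => .tt
  | .bot => .bot

/-- Left-sequential conjunction. -/
def Three.and : Three → Three → Three
  | .tt, y => y
  | .ff, _ => .ff
  | .bot, _ => .bot

/-- Left-sequential disjunction. -/
def Three.or : Three → Three → Three
  | .tt, _ => .tt
  | .ff, y => y
  | .bot, _ => .bot

/-- Implication. -/
def Three.imp : Three → Three → Three
  | .tt, y => y
  | .ff, _ => .tt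
  | .bot, _ => .bot

/-- McCarthy's left-sequential three-valued logic satisfies all eleven
Guzman–Squier axioms. -/
theorem guzman_squier_axioms (x y z : Three) :
    Three.neg .tt = .ff ∧
    Three.neg .bot = .bot ∧
    x.neg.neg = x ∧
    (x.and y).neg = x.neg.or y.neg ∧
    x.imp y = x.neg.or y ∧
    x.and (y.and z) = (x.and y).and z ∧
    Three.and .tt x = x ∧
    x.or (x.and y) = x ∧
    x.and (y.or z) = (x.and y).or (x.and z) ∧
    (x.or y).and z = (x.and z).or ((x.neg.and y).and z) ∧
    (x.and y).or (y.and x) = (y.and x).or (x.and y) := by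
  rcases x <;> rcases y <;> rcases z <;> simp [Three.neg, Three.and, Three.or, Three.imp]
end

section
/- The left-sequential five-valued propositional logic on truth values {T, F, m, d₁, d₂} satisfies the Bergstra–Van de Pol axiom system extended with a self-negation axiom for each non-classical value: for all x, y, z in {T, F, m, d₁, d₂}: ¬m = m, ¬d₁ = d₁, ¬d₂ = d₂, ¬T = F, ¬¬x = x, T ⋀ x = x, F ⋀ x = F, x ⋁ y = ¬(¬x ⋀ ¬y), x ⋀ (y ⋀ z) = (x ⋀ y) ⋀ z, and (x ⋁ y) ⋀ z = (¬x ⋀ y ⋀ z) ⋁ (x ⋀ z) ⋁ (x ⋀ z). -/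
/-- The five truth values of the left-sequential five-valued logic. -/
inductive Five : Type
  | tt : Five
  | ff : Five
  | m : Five
  | d1 : Five
  | d2 : Five
  deriving DecidableEq

/-- Negation. -/
def Five.neg : Five → Five
  | .tt => .ff
  | .ff => .tt
  | .m => .m
  | .d1 => .d1
  | .d2 => .d2

/-- Left-sequential conjunction. -/
def Five.and : Five → Five → Five
  | .tt, y => y
  | .ff, _ => .ff
  | .m, _ => .m
  | .d1, _ => .d1
  | .d2, _ => .d2

/-- Left-sequential disjunction. -/
def Five.or : Five → Five → Five
  | .tt, _ => .tt
  | .ff, y => y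
  | .m, _ => .m
  | .d1, _ => .d1
  | .d2, _ => .d2

/-- The left-sequential five-valued logic satisfies the Bergstra–Van de Pol
axioms extended with a self-negation axiom for each non-classical value. -/
theorem five_valued_axioms (x y z : Five) :
    Five.neg .m = .m ∧
    Five.neg .d1 = .d1 ∧
    Five.neg .d2 = .d2 ∧
    Five.neg .tt = .ff ∧
    x.neg.neg = x ∧
    Five.and .tt x = x ∧
    Five.and .ff x = .ff ∧
    x.or y = (x.neg.and y.neg).neg ∧
    x.and (y.and z) = (x.and y).and z ∧
    (x.or y).and z = (((x.neg.and y).and z).or (x.and z)).or (x.and z) := by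
  cases x <;> cases y <;> cases z <;> simp [Five.neg, Five.and, Five.or]
end

section
/- Let U be a closed head-active λ-term, i.e. U β-reduces to a term of the form λx₁…xₙ. R P₁ ⋯ Pₖ where R is root-active. Then for every closed λ-term N, the terms ¬U, U ⋀ N, U ⋁ N and U ⇒ N are all head-active. -/
/-- Untyped λ-terms in de Bruijn representation. -/
inductive Lam : Type
  | var : ℕ → Lam
  | app : Lam → Lam → Lam
  | lam : Lam → Lam
  deriving DecidableEq

/-- Lift (shift) the free variables `≥ d` of a term by one. -/
def Lam.lift (d : ℕ) : Lam → Lam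
  | .var n => if n < d then .var n else .var (n + 1)
  | .app a b => .app (a.lift d) (b.lift d)
  | .lam a => .lam (a.lift (d + 1))

/-- Capture-avoiding substitution of `s` for the variable `k`. -/
def Lam.subst : Lam → ℕ → Lam → Lam
  | .var n, k, s => if n = k then s else if k < n then .var (n - 1) else .var n
  | .app a b, k, s => .app (a.subst k s) (b.subst k s)
  | .lam a, k, s => .lam (a.subst (k + 1) (s.lift 0))

/-- One-step β-reduction. -/
inductive Lam.Step : Lam → Lam → Prop
  | beta (a b : Lam) : Lam.Step (.app (.lam a) b) (a.subst 0 b)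
  | appL {a a' : Lam} (b : Lam) : Lam.Step a a' → Lam.Step (.app a b) (.app a' b)
  | appR (a : Lam) {b b' : Lam} : Lam.Step b b' → Lam.Step (.app a b) (.app a b')
  | lam {a a' : Lam} : Lam.Step a a' → Lam.Step (.lam a) (.lam a')

/-- β-reduction: reflexive–transitive closure of one-step β-reduction. -/
def Lam.Red : Lam → Lam → Prop := Relation.ReflTransGen Lam.Step

/-- β-convertibility: the equivalence closure of one-step β-reduction. -/
def Lam.BetaEq : Lam → Lam → Prop := Relation.EqvGen Lam.Step

/-- The variable `k` occurs free in the term. -/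
def Lam.HasVar : Lam → ℕ → Prop
  | .var n, k => n = k
  | .app a b, k => a.HasVar k ∨ b.HasVar k
  | .lam a, k => a.HasVar (k + 1)

/-- A term is closed when it has no free variables. -/
def Lam.Closed (M : Lam) : Prop := ∀ k, ¬ M.HasVar k

/-- The identity combinator `I := λx. x`. -/
def Iterm : Lam := .lam (.var 0)

/-- A closed term `M` is solvable if `M N₁ ⋯ Nₖ =β I` for some terms `N₁, …, Nₖ`. -/
def Lam.Solvable (M : Lam) : Prop :=
  ∃ l : List Lam, Lam.BetaEq (l.foldl Lam.app M) Iterm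

/-- The Church boolean true, `T := λx y. x`. -/
def Tb : Lam := .lam (.lam (.var 1))

/-- The Church boolean false, `F := λx y. y`. -/
def Fb : Lam := .lam (.lam (.var 0))

/-- Negation: `¬M := M F T`. -/
def negL (M : Lam) : Lam := .app (.app M Fb) Tb

/-- Left-sequential conjunction: `M ⋀ N := M N M`. -/
def andL (M N : Lam) : Lam := .app (.app M N) M

/-- Left-sequential disjunction: `M ⋁ N := M M N`. -/
def orL (M N : Lam) : Lam := .app (.app M M) N

/-- Implication: `M ⇒ N := M N T`. -/
def impL (M N : Lam) : Lam := .app (.app M N) Tb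

/-- A term is root-active if every β-reduct of it β-reduces to a β-redex. -/
def Lam.RootActive (M : Lam) : Prop :=
  ∀ N : Lam, Lam.Red M N → ∃ P Q : Lam, Lam.Red N (.app (.lam P) Q)

/-- `absN n M = λx₁…xₙ. M`. -/
def absN : ℕ → Lam → Lam
  | 0, M => M
  | n + 1, M => .lam (absN n M)

/-- `appList M [P₁, …, Pₖ] = M P₁ ⋯ Pₖ`. -/
def appList (M : Lam) (l : List Lam) : Lam := l.foldl Lam.app M

/-- A term is head-active if it β-reduces to a head active form
`λx₁…xₙ. R P₁ ⋯ Pₖ` with `R` root-active. -/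
def Lam.HeadActive (M : Lam) : Prop :=
  ∃ (n : ℕ) (R : Lam) (l : List Lam), R.RootActive ∧ Lam.Red M (absN n (appList R l))

namespace Lam

/-! ### de Bruijn lift/subst lemmas -/

theorem lift_lift : ∀ (M : Lam) {i j : ℕ}, i ≤ j →
    (M.lift i).lift (j+1) = (M.lift j).lift i
  | .var n, i, j, h => by
      simp only [lift]; split_ifs <;> simp only [lift] <;> split_ifs <;>
        first | rfl | omega | (congr 1; omega)
  | .app a b, i, j, h => by
      simp only [lift]; rw [lift_lift a h, lift_lift b h]
  | .lam a, i, j, h => by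
      simp only [lift]; rw [lift_lift a (Nat.succ_le_succ h)]

theorem subst_lift_self : ∀ (M : Lam) {k : ℕ} {s : Lam},
    (M.lift k).subst k s = M
  | .var n, k, s => by
      simp only [lift]; split_ifs <;> simp only [subst] <;> split_ifs <;>
        first | rfl | omega | (congr 1; omega)
  | .app a b, k, s => by
      simp only [lift, subst]; rw [subst_lift_self a, subst_lift_self b]
  | .lam a, k, s => by
      simp only [lift, subst]; rw [subst_lift_self a]

theorem lift_subst_low : ∀ (M : Lam) {i j : ℕ} {s : Lam}, i ≤ j →
    (M.subst j s).lift i = (M.lift i).subst (j+1) (s.lift i)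
  | .var n, i, j, s, h => by
      simp only [subst, lift]; split_ifs <;> simp only [subst, lift] <;> split_ifs <;>
        first | rfl | omega | (congr 1; omega)
  | .app a b, i, j, s, h => by
      simp only [subst, lift]; rw [lift_subst_low a h, lift_subst_low b h]
  | .lam a, i, j, s, h => by
      simp only [subst, lift]
      rw [lift_subst_low a (Nat.succ_le_succ h), lift_lift s (Nat.zero_le i)]

theorem subst_lift_comm : ∀ (M : Lam) {i j : ℕ} {s : Lam}, j ≤ i →
    (M.subst j s).lift i = (M.lift (i+1)).subst j (s.lift i)
  | .var n, i, j, s, h => by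
      simp only [subst, lift]; split_ifs <;> simp only [subst, lift] <;> split_ifs <;>
        first | rfl | omega | (congr 1; omega)
  | .app a b, i, j, s, h => by
      simp only [subst, lift]; rw [subst_lift_comm a h, subst_lift_comm b h]
  | .lam a, i, j, s, h => by
      simp only [subst, lift]
      rw [subst_lift_comm a (Nat.succ_le_succ h), lift_lift s (Nat.zero_le i)]

theorem subst_subst : ∀ (M : Lam) {i j : ℕ} {u s : Lam}, i ≤ j →
    (M.subst i u).subst j s = (M.subst (j+1) (s.lift i)).subst i (u.subst j s)
  | .var n, i, j, u, s, h => by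
      simp only [subst]; split_ifs <;> (try simp only [subst]) <;> (try split_ifs) <;>
        first | rfl | omega | (congr 1; omega) | (rw [subst_lift_self])
  | .app a b, i, j, u, s, h => by
      simp only [subst]; rw [subst_subst a h, subst_subst b h]
  | .lam a, i, j, u, s, h => by
      simp only [subst]
      rw [subst_subst a (Nat.succ_le_succ h), lift_lift s (Nat.zero_le i),
        lift_subst_low u (Nat.zero_le j)]

end Lam
namespace Lam

/-! ### Basic Red lemmas -/

theorem Red.refl' {M : Lam} : Red M M := Relation.ReflTransGen.refl

theorem Red.trans' {M N P : Lam} (h₁ : Red M N) (h₂ : Red N P) : Red M P :=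
  Relation.ReflTransGen.trans h₁ h₂

theorem Red.appL' {a a' : Lam} (b : Lam) (h : Red a a') : Red (.app a b) (.app a' b) := by
  induction h with
  | refl => exact Relation.ReflTransGen.refl
  | tail _ hs ih => exact ih.tail (Step.appL b hs)

theorem Red.appR' (a : Lam) {b b' : Lam} (h : Red b b') : Red (.app a b) (.app a b') := by
  induction h with
  | refl => exact Relation.ReflTransGen.refl
  | tail _ hs ih => exact ih.tail (Step.appR a hs)

theorem Red.lam' {a a' : Lam} (h : Red a a') : Red (.lam a) (.lam a') := by
  induction h with
  | refl => exact Relation.ReflTransGen.refl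
  | tail _ hs ih => exact ih.tail (Step.lam hs)

theorem Red.app_cong {a a' b b' : Lam} (h₁ : Red a a') (h₂ : Red b b') :
    Red (.app a b) (.app a' b') :=
  (Red.appL' b h₁).trans' (Red.appR' a' h₂)

/-! ### Parallel reduction -/

inductive Par : Lam → Lam → Prop
  | var (n : ℕ) : Par (.var n) (.var n)
  | lam {a a' : Lam} : Par a a' → Par (.lam a) (.lam a')
  | app {a a' b b' : Lam} : Par a a' → Par b b' → Par (.app a b) (.app a' b')
  | beta {a a' b b' : Lam} : Par a a' → Par b b' → Par (.app (.lam a) b) (a'.subst 0 b')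

theorem Par.refl' : ∀ (M : Lam), Par M M
  | .var n => .var n
  | .app a b => .app (Par.refl' a) (Par.refl' b)
  | .lam a => .lam (Par.refl' a)

theorem Step.toPar {M N : Lam} (h : Step M N) : Par M N := by
  induction h with
  | beta a b => exact Par.beta (Par.refl' a) (Par.refl' b)
  | appL b _ ih => exact Par.app ih (Par.refl' b)
  | appR a _ ih => exact Par.app (Par.refl' a) ih
  | lam _ ih => exact Par.lam ih

theorem Par.toRed {M N : Lam} (h : Par M N) : Red M N := by
  induction h with
  | var n => exact Red.refl'
  | lam _ ih => exact Red.lam' ih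
  | app _ _ ih₁ ih₂ => exact Red.app_cong ih₁ ih₂
  | beta _ _ ih₁ ih₂ =>
      exact (Red.app_cong (Red.lam' ih₁) ih₂).tail (Step.beta _ _)

theorem Par.lift {a b : Lam} (h : Par a b) : ∀ (d : ℕ), Par (a.lift d) (b.lift d) := by
  induction h with
  | var n => intro d; simp only [Lam.lift]; split_ifs <;> exact Par.refl' _
  | lam _ ih => intro d; exact Par.lam (ih (d+1))
  | app _ _ ih₁ ih₂ => intro d; exact Par.app (ih₁ d) (ih₂ d)
  | beta _ _ ih₁ ih₂ =>
      intro d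
      simp only [Lam.lift]
      rw [subst_lift_comm _ (Nat.zero_le d)]
      exact Par.beta (ih₁ (d+1)) (ih₂ d)

theorem Par.subst' {a a' : Lam} (h : Par a a') :
    ∀ {s s' : Lam} (k : ℕ), Par s s' → Par (a.subst k s) (a'.subst k s') := by
  induction h with
  | var n =>
      intro s s' k hs
      simp only [Lam.subst]; split_ifs <;> first | exact hs | exact Par.refl' _
  | lam _ ih =>
      intro s s' k hs
      exact Par.lam (ih (k+1) (hs.lift 0))
  | app _ _ ih₁ ih₂ =>
      intro s s' k hs
      exact Par.app (ih₁ k hs) (ih₂ k hs)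
  | beta _ _ ih₁ ih₂ =>
      intro s s' k hs
      simp only [Lam.subst]
      rw [subst_subst _ (Nat.zero_le k)]
      exact Par.beta (ih₁ (k+1) (hs.lift 0)) (ih₂ k hs)

/-! ### Weak head reduction -/

inductive Wh : Lam → Lam → Prop
  | beta (a b : Lam) : Wh (.app (.lam a) b) (a.subst 0 b)
  | app {a a' : Lam} (b : Lam) : Wh a a' → Wh (.app a b) (.app a' b)

def WhRed : Lam → Lam → Prop := Relation.ReflTransGen Wh

theorem Wh.toStep {M N : Lam} (h : Wh M N) : Step M N := by
  induction h with
  | beta a b => exact Step.beta a b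
  | app b _ ih => exact Step.appL b ih

theorem WhRed.toRed {M N : Lam} (h : WhRed M N) : Red M N := by
  induction h with
  | refl => exact Red.refl'
  | tail _ hs ih => exact ih.tail hs.toStep

theorem no_wh_lam {a X : Lam} (h : Wh (.lam a) X) : False := by cases h

theorem no_wh_var {n : ℕ} {X : Lam} (h : Wh (.var n) X) : False := by cases h

theorem wh_det {M N N' : Lam} (h₁ : Wh M N) (h₂ : Wh M N') : N = N' := by
  induction h₁ generalizing N' with
  | beta a b =>
      cases h₂ with
      | beta => rfl
      | app _ h => exact absurd h no_wh_lam
  | app b _ ih =>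
      cases h₂ with
      | beta => exact absurd (by assumption) no_wh_lam
      | app _ h => rw [ih h]

theorem Wh.subst' {M M' : Lam} (h : Wh M M') (k : ℕ) (s : Lam) :
    Wh (M.subst k s) (M'.subst k s) := by
  induction h with
  | beta a b =>
      simp only [Lam.subst]
      rw [subst_subst _ (Nat.zero_le k)]
      exact Wh.beta _ _
  | app b _ ih => exact Wh.app _ (ih)

theorem WhRed.subst' {M M' : Lam} (h : WhRed M M') (k : ℕ) (s : Lam) :
    WhRed (M.subst k s) (M'.subst k s) := by
  induction h with
  | refl => exact Relation.ReflTransGen.refl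
  | tail _ hs ih => exact ih.tail (hs.subst' k s)

theorem WhRed.appL' {a a' : Lam} (b : Lam) (h : WhRed a a') :
    WhRed (.app a b) (.app a' b) := by
  induction h with
  | refl => exact Relation.ReflTransGen.refl
  | tail _ hs ih => exact ih.tail (Wh.app b hs)

theorem whred_lam_unique {p a b : Lam} (h₁ : WhRed p (.lam a)) (h₂ : WhRed p (.lam b)) :
    a = b := by
  induction h₁ using Relation.ReflTransGen.head_induction_on with
  | refl =>
      cases (Relation.ReflTransGen.cases_head h₂) with
      | inl h => exact (Lam.lam.injEq _ _).mp h.symm |>.symm ▸ rfl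
      | inr h => exact absurd h.choose_spec.1 no_wh_lam
  | head hs _ ih =>
      cases (Relation.ReflTransGen.cases_head h₂) with
      | inl h => subst h; exact absurd hs no_wh_lam
      | inr h =>
        obtain ⟨c, hc, hcr⟩ := h
        rw [wh_det hs hc] at *
        exact ih hcr
/-! ### Root-development counting along weak head reduction -/

inductive RD : ℕ → Lam → Prop
  | zero (M : Lam) : RD 0 M
  | beta {k : ℕ} {a b : Lam} : RD k (a.subst 0 b) → RD (k+1) (.app (.lam a) b)
  | whL {k : ℕ} {a a' b : Lam} : Wh a a' → RD k (.app a' b) → RD k (.app a b)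

theorem RD.le {k' : ℕ} {M : Lam} (h : RD k' M) : ∀ k, k ≤ k' → RD k M := by
  induction h with
  | zero M =>
      intro k hk
      obtain rfl : k = 0 := Nat.le_zero.mp hk
      exact RD.zero M
  | beta h ih =>
      intro k hk
      cases k with
      | zero => exact RD.zero _
      | succ k₁ => exact RD.beta (ih k₁ (by omega))
  | whL hw _ ih =>
      intro k hk
      exact RD.whL hw (ih k hk)

theorem RD.mono {k : ℕ} {M : Lam} (h : RD (k+1) M) : RD k M :=
  h.le k (Nat.le_succ k)

theorem RD.var_false {k : ℕ} {n : ℕ} (h : RD (k+1) (.var n)) : False := by cases h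

theorem RD.lam_false {k : ℕ} {a : Lam} (h : RD (k+1) (.lam a)) : False := by cases h

theorem RD.redex_inv {k : ℕ} {a b : Lam} (h : RD (k+1) (.app (.lam a) b)) :
    RD k (a.subst 0 b) := by
  cases h with
  | beta h => exact h
  | whL hw _ => exact absurd hw no_wh_lam

theorem RD.wh_head {k : ℕ} {p p' q : Lam} (h : RD k (.app p q)) (hw : Wh p p') :
    RD k (.app p' q) := by
  cases h with
  | zero => exact RD.zero _
  | beta h => exact absurd hw no_wh_lam
  | whL hw' h => rwa [wh_det hw hw']

theorem RD.app_inv : ∀ {k : ℕ} {p q : Lam}, RD (k+1) (.app p q) →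
    ∃ a : Lam, WhRed p (.lam a) ∧ RD k (a.subst 0 q) := by
  have key : ∀ {k' : ℕ} {M : Lam}, RD k' M → ∀ {k : ℕ} {p q : Lam},
      k' = k + 1 → M = .app p q → ∃ a : Lam, WhRed p (.lam a) ∧ RD k (a.subst 0 q) := by
    intro k' M h
    induction h with
    | zero => intro k p q hk hM; omega
    | beta h ih =>
        intro k p q hk hM
        injection hM with h1 h2
        subst h1; subst h2
        rename_i k₀ a b
        obtain rfl : k = k₀ := by omega
        exact ⟨a, Relation.ReflTransGen.refl, h⟩
    | whL hw _ ih =>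
        intro k p q hk hM
        injection hM with h1 h2
        subst h1; subst h2
        obtain ⟨c, hc, hcr⟩ := ih hk rfl
        exact ⟨c, hc.head hw, hcr⟩
  intro k p q h
  exact key h rfl rfl

theorem RD.app_mk {k : ℕ} {p q a : Lam} (h : WhRed p (.lam a))
    (hc : RD k (a.subst 0 q)) : RD (k+1) (.app p q) := by
  induction h using Relation.ReflTransGen.head_induction_on with
  | refl => exact RD.beta hc
  | head hs _ ih => exact RD.whL hs ih

theorem RD.subst' : ∀ {k : ℕ} {M : Lam}, RD k M → ∀ (j : ℕ) (s : Lam),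
    RD k (M.subst j s) := by
  intro k M h
  induction h with
  | zero => intro j s; exact RD.zero _
  | beta _ ih =>
      intro j s
      simp only [Lam.subst]
      exact RD.beta (by rw [← subst_subst _ (Nat.zero_le j)]; exact ih j s)
  | whL hw _ ih =>
      intro j s
      exact RD.whL (hw.subst' j s) (ih j s)

theorem rd_all_wh {M M' : Lam} (h : ∀ j, RD j M) (hw : Wh M M') : ∀ j, RD j M' := by
  intro j
  cases hw with
  | beta a b => exact RD.redex_inv (h (j+1))
  | app b hw' => exact RD.wh_head (h j) hw'

theorem rd_all_whred {M P : Lam} (h : ∀ j, RD j M) (hw : WhRed M P) : ∀ j, RD j P := by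
  revert h
  induction hw using Relation.ReflTransGen.head_induction_on with
  | refl => exact fun h => h
  | head hs _ ih => exact fun h => ih (rd_all_wh h hs)
/-! ### Internal parallel reduction and factorization -/

inductive ParI : Lam → Lam → Prop
  | var (n : ℕ) : ParI (.var n) (.var n)
  | lam {a a' : Lam} : Par a a' → ParI (.lam a) (.lam a')
  | app {a a' b b' : Lam} : ParI a a' → Par b b' → ParI (.app a b) (.app a' b')

theorem ParI.refl' : ∀ (M : Lam), ParI M M
  | .var n => .var n
  | .app a b => .app (ParI.refl' a) (Par.refl' b)
  | .lam a => .lam (Par.refl' a)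

theorem ParI.toPar {M N : Lam} (h : ParI M N) : Par M N := by
  induction h with
  | var n => exact Par.var n
  | lam h => exact Par.lam h
  | app _ hb ih => exact Par.app ih hb

/-- Strong parallel step: weak head steps followed by an internal parallel step. -/
def SP (M N : Lam) : Prop := ∃ P : Lam, WhRed M P ∧ ParI P N

theorem SP.of_parI {M N : Lam} (h : ParI M N) : SP M N :=
  ⟨M, Relation.ReflTransGen.refl, h⟩

theorem SP.refl' (M : Lam) : SP M M := SP.of_parI (ParI.refl' M)

theorem SP.app_cong {m m' b b' : Lam} (h : SP m m') (hb : Par b b') :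
    SP (.app m b) (.app m' b') := by
  obtain ⟨P, hw, hI⟩ := h
  exact ⟨.app P b, WhRed.appL' b hw, ParI.app hI hb⟩

theorem par_lam_inv {a c : Lam} (h : Par (.lam a) c) : ∃ a₁, c = .lam a₁ ∧ Par a a₁ := by
  cases h with
  | lam h => exact ⟨_, rfl, h⟩

theorem parI_lam_inv {a c : Lam} (h : ParI c (.lam a)) : ∃ c₀, c = .lam c₀ ∧ Par c₀ a := by
  cases h with
  | lam h => exact ⟨_, rfl, h⟩

/-- Key substitution lemma for SP. -/
theorem SP.key2 {P a' : Lam} (h : ParI P a') : ∀ {b b' : Lam}, Par b b' → SP b b' →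
    SP (P.subst 0 b) (a'.subst 0 b') := by
  induction h with
  | var n =>
      intro b b' hb hsb
      simp only [Lam.subst]
      split_ifs with h0 h1
      · exact hsb
      · exact SP.refl' _
      · exact SP.refl' _
  | lam hc =>
      intro b b' hb _
      simp only [Lam.subst]
      exact SP.of_parI (ParI.lam (hc.subst' 1 (hb.lift 0)))
  | app _ hd ih =>
      intro b b' hb hsb
      simp only [Lam.subst]
      exact SP.app_cong (ih hb hsb) (hd.subst' 0 hb)

/-- Factorization: every parallel step factors as weak-head steps then an internal step. -/
theorem Par.factor {M N : Lam} (h : Par M N) : SP M N := by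
  induction h with
  | var n => exact SP.refl' _
  | lam h => exact SP.of_parI (ParI.lam h)
  | app _ hb iha _ => exact SP.app_cong iha hb
  | beta ha hb iha ihb =>
      obtain ⟨Pa, hwa, hIa⟩ := iha
      obtain ⟨Q, hwq, hIq⟩ := SP.key2 hIa hb ihb
      refine ⟨Q, ?_, hIq⟩
      exact ((Relation.ReflTransGen.single (Wh.beta _ _)).trans
        ((hwa.subst' 0 _).trans hwq))
/-! ### Forward commutation: pushing weak head steps through parallel steps -/

theorem par_wh_fwd {p p' : Lam} (hw : Wh p p') : ∀ {q : Lam}, Par p q →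
    ∃ q', WhRed q q' ∧ Par p' q' := by
  induction hw with
  | beta a b =>
      intro q hq
      cases hq with
      | app hc hd =>
          obtain ⟨a₁, rfl, ha₁⟩ := par_lam_inv hc
          exact ⟨a₁.subst 0 _, Relation.ReflTransGen.single (Wh.beta _ _),
            ha₁.subst' 0 hd⟩
      | beta ha hb => exact ⟨_, Relation.ReflTransGen.refl, ha.subst' 0 hb⟩
  | app b hw' ih =>
      intro q hq
      cases hq with
      | app hc hd =>
          obtain ⟨c₂, hc₂, hpc₂⟩ := ih hc
          exact ⟨.app c₂ _, WhRed.appL' _ hc₂, Par.app hpc₂ hd⟩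
      | beta ha hb => exact absurd hw' no_wh_lam

theorem par_whred_fwd {p X : Lam} (hw : WhRed p X) : ∀ {q : Lam}, Par p q →
    ∃ Y, WhRed q Y ∧ Par X Y := by
  induction hw using Relation.ReflTransGen.head_induction_on with
  | refl => exact fun hq => ⟨_, Relation.ReflTransGen.refl, hq⟩
  | head hs _ ih =>
      intro q hq
      obtain ⟨q₁, hq₁, hpq₁⟩ := par_wh_fwd hs hq
      obtain ⟨Y, hY, hXY⟩ := ih hpq₁
      exact ⟨Y, hq₁.trans hY, hXY⟩

/-! ### Forward preservation of unbounded root development -/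

theorem rd_all_par : ∀ (k : ℕ) {M N : Lam}, (∀ j, RD j M) → Par M N → RD k N := by
  intro k
  induction k with
  | zero => intro M N _ _; exact RD.zero _
  | succ k ih =>
      intro M N hM hMN
      obtain ⟨P, hMP, hPN⟩ := hMN.factor
      have hP : ∀ j, RD j P := rd_all_whred hM hMP
      cases hPN with
      | var n => exact absurd (hP 1) (fun h => RD.var_false h)
      | lam h => exact absurd (hP 1) (fun h => RD.lam_false h)
      | app hI hb =>
          rename_i p₁ n₁ p₂ n₂
          obtain ⟨a, hp₁, _⟩ := RD.app_inv (hP 1)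
          have hall : ∀ j, RD j (a.subst 0 p₂) := by
            intro j
            obtain ⟨a', hp₁', h'⟩ := RD.app_inv (hP (j+1))
            rwa [whred_lam_unique hp₁' hp₁] at h'
          obtain ⟨Y, hn₁Y, hlamY⟩ := par_whred_fwd hp₁ hI.toPar
          obtain ⟨a₁, rfl, haa₁⟩ := par_lam_inv hlamY
          exact RD.app_mk hn₁Y (ih hall (haa₁.subst' 0 hb))

/-! ### Backward: weak head chains pull back through internal steps -/

theorem parI_wh_back {Q Q' : Lam} (hw : Wh Q Q') : ∀ {P : Lam}, ParI P Q →
    ∃ P', WhRed P P' ∧ ParI P' Q' := by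
  induction hw with
  | beta u v =>
      intro P hP
      cases hP with
      | app hc hd =>
          obtain ⟨c₀, rfl, hc₀⟩ := parI_lam_inv hc
          obtain ⟨P', hw', hI'⟩ := (hc₀.subst' 0 hd).factor
          exact ⟨P', (Relation.ReflTransGen.single (Wh.beta _ _)).trans hw', hI'⟩
  | app b hw' ih =>
      intro P hP
      cases hP with
      | app hc hd =>
          obtain ⟨c', hcc', hI'⟩ := ih hc
          exact ⟨.app c' _, WhRed.appL' _ hcc', ParI.app hI' hd⟩

theorem parI_whred_back {Q V : Lam} (hw : WhRed Q V) : ∀ {P : Lam}, ParI P Q →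
    ∃ P', WhRed P P' ∧ ParI P' V := by
  induction hw using Relation.ReflTransGen.head_induction_on with
  | refl => exact fun hP => ⟨_, Relation.ReflTransGen.refl, hP⟩
  | head hs _ ih =>
      intro P hP
      obtain ⟨P₁, hP₁, hI₁⟩ := parI_wh_back hs hP
      obtain ⟨P', hP', hI'⟩ := ih hI₁
      exact ⟨P', hP₁.trans hP', hI'⟩

theorem red_redex_to_wh {M u v : Lam} (h : Red M (.app (.lam u) v)) :
    ∃ a b : Lam, WhRed M (.app (.lam a) b) := by
  induction h using Relation.ReflTransGen.head_induction_on with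
  | refl => exact ⟨u, v, Relation.ReflTransGen.refl⟩
  | head hs _ ih =>
      obtain ⟨a, b, hab⟩ := ih
      obtain ⟨P, hMP, hPN⟩ := (Step.toPar hs).factor
      obtain ⟨P', hPP', hI'⟩ := parI_whred_back hab hPN
      cases hI' with
      | app hc hd =>
          obtain ⟨c₀, rfl, _⟩ := parI_lam_inv hc
          exact ⟨c₀, _, hMP.trans hPP'⟩

/-! ### The equivalence between root activity and unbounded root development -/

theorem RootActive.reduct {M N : Lam} (h : M.RootActive) (hr : Red M N) :
    N.RootActive := fun X hX => h X (hr.trans' hX)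

theorem RD.wh_back {k : ℕ} {M M' : Lam} (hw : Wh M M') (h : RD k M') : RD k M := by
  cases hw with
  | beta a b =>
      cases k with
      | zero => exact RD.zero _
      | succ k₁ => exact RD.beta h.mono
  | app b hw' => exact RD.whL hw' h

theorem RD.whred_back {k : ℕ} {M M' : Lam} (hw : WhRed M M') (h : RD k M') : RD k M := by
  induction hw using Relation.ReflTransGen.head_induction_on with
  | refl => exact h
  | head hs _ ih => exact RD.wh_back hs ih

theorem RootActive.rd (k : ℕ) : ∀ {M : Lam}, M.RootActive → RD k M := by
  induction k with
  | zero => intro M _; exact RD.zero M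
  | succ k ih =>
      intro M h
      obtain ⟨P, Q, hPQ⟩ := h M Red.refl'
      obtain ⟨a, b, hwh⟩ := red_redex_to_wh hPQ
      have hred : Red M (a.subst 0 b) := hwh.toRed.tail (Step.beta a b)
      exact RD.whred_back hwh (RD.beta (ih (h.reduct hred)))

theorem rd_rootActive {M : Lam} (h : ∀ k, RD k M) : M.RootActive := by
  intro N hMN
  have hN : ∀ k, RD k N := by
    induction hMN with
    | refl => exact h
    | tail _ hs ih => exact fun k => rd_all_par k ih (Step.toPar hs)
  match N, hN 1 with
  | .app p q, h1 =>
      obtain ⟨a, hwh, _⟩ := RD.app_inv h1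
      exact ⟨a, q, (WhRed.appL' q hwh).toRed⟩
  | .var n, h1 => exact absurd h1 (fun h => RD.var_false h)
  | .lam c, h1 => exact absurd h1 (fun h => RD.lam_false h)

/-- Root activity is closed under substitution. -/
theorem RootActive.subst {M : Lam} (h : M.RootActive) (j : ℕ) (s : Lam) :
    (M.subst j s).RootActive :=
  rd_rootActive (fun k => (RootActive.rd k h).subst' j s)
end Lam

/-! ### Assembly: head-activity is preserved by application -/

/-- Iterated lifting. -/
def liftN : ℕ → Lam → Lam
  | 0, s => s
  | n + 1, s => liftN n (s.lift 0)

theorem absN_subst : ∀ (n : ℕ) (X : Lam) (k : ℕ) (s : Lam),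
    (absN n X).subst k s = absN n (X.subst (n + k) (liftN n s))
  | 0, X, k, s => by simp [absN, liftN]
  | n + 1, X, k, s => by
      simp only [absN, Lam.subst, liftN]
      rw [absN_subst n X (k+1) (s.lift 0), show n + (k + 1) = n + 1 + k by omega]

theorem appList_subst (l : List Lam) : ∀ (R : Lam) (k : ℕ) (s : Lam),
    (appList R l).subst k s = appList (R.subst k s) (l.map (fun t => t.subst k s)) := by
  induction l with
  | nil => intro R k s; simp [appList]
  | cons t l ih =>
      intro R k s
      simp only [appList, List.foldl_cons, List.map_cons]
      exact ih (R.app t) k s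

theorem appList_append_single (R : Lam) (l : List Lam) (A : Lam) :
    appList R (l ++ [A]) = .app (appList R l) A := by
  simp [appList, List.foldl_append]

theorem Lam.HeadActive.app {M : Lam} (h : M.HeadActive) (A : Lam) :
    (Lam.app M A).HeadActive := by
  obtain ⟨n, R, l, hRA, hred⟩ := h
  cases n with
  | zero =>
      refine ⟨0, R, l ++ [A], hRA, ?_⟩
      have : Lam.Red (.app M A) (.app (absN 0 (appList R l)) A) :=
        Lam.Red.appL' A hred
      rwa [show absN 0 (appList R l) = appList R l from rfl,
        ← appList_append_single] at this
  | succ n =>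
      have hred' : Lam.Red (.app M A) ((absN n (appList R l)).subst 0 A) :=
        (Lam.Red.appL' A hred).tail (Lam.Step.beta _ _)
      rw [absN_subst, appList_subst] at hred'
      exact ⟨n, R.subst (n+0) (liftN n A), _, hRA.subst _ _, hred'⟩

/-- The connectives preserve head-activeness in the first argument. -/
theorem connectives_preserve_headActive (U : Lam) (hUc : U.Closed)
    (hU : U.HeadActive) (N : Lam) (hNc : N.Closed) :
    (negL U).HeadActive ∧ (andL U N).HeadActive ∧
    (orL U N).HeadActive ∧ (impL U N).HeadActive :=
  ⟨(hU.app Fb).app Tb, (hU.app N).app U, (hU.app U).app N, (hU.app N).app Tb⟩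
end
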